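/- arXiv:1306.6943 — 2 statements merged into one kernel-verified Lean document; each statement's English description precedes it below -/
import Mathlib

section
/- Let C = ln(1+√2)/π. The minimum value H* of the Ising Hamiltonian H(S) on the Chimera graph G_r satisfies H* ≤ A_0 + A_1 − C·A_01, where A_0 = Σ_{(u,v)∈E_0}|c_{uv}|, A_1 = Σ_{(u,v)∈E_1}|c_{uv}|, and A_01 = Σ_{(u,v)∈E_01}|c_{uv}|. -/
open Finset

abbrev ChimeraVertex (r : ℕ) := Fin r × Fin r × Fin 4 × Fin 2

def lowRow {r : ℕ} (i : Fin (r - 1)) : Fin r := ⟨i.val, by have := i.isLt; omega⟩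

def highRow {r : ℕ} (i : Fin (r - 1)) : Fin r := ⟨i.val + 1, by have := i.isLt; omega⟩

/-- `S` is a valid spin assignment, i.e. takes values in `{-1, 1}`. -/
def IsPM {r : ℕ} (S : ChimeraVertex r → ℝ) : Prop := ∀ v, S v = 1 ∨ S v = -1

/-- The Ising Hamiltonian on the Chimera graph `G_r`. -/
def IsingH {r : ℕ} (c0 : Fin (r - 1) → Fin r → Fin 4 → ℝ)
    (c1 : Fin r → Fin (r - 1) → Fin 4 → ℝ)
    (c01 : Fin r → Fin r → Fin 4 → Fin 4 → ℝ)
    (d : ChimeraVertex r → ℝ) (S : ChimeraVertex r → ℝ) : ℝ :=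
  (∑ i, ∑ j, ∑ k, c0 i j k * (S (lowRow i, j, k, 0) * S (highRow i, j, k, 0)))
    + (∑ i, ∑ j, ∑ k, c1 i j k * (S (i, lowRow j, k, 1) * S (i, highRow j, k, 1)))
    + (∑ i, ∑ j, ∑ k0, ∑ k1, c01 i j k0 k1 * (S (i, j, k0, 0) * S (i, j, k1, 1)))
    + (∑ v, d v * S v)


lemma key (a b c d : ℝ) : 6 * (|a| + |b| + |c| + |d|) ≤
    |a + b + c + d| + |a + b + c + -d| + (|a + b + -c + d| + |a + b + -c + -d|) +
        (|a + -b + c + d| + |a + -b + c + -d| + (|a + -b + -c + d| + |a + -b + -c + -d|)) +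
      (|-a + b + c + d| + |-a + b + c + -d| + (|-a + b + -c + d| + |-a + b + -c + -d|) +
        (|-a + -b + c + d| + |-a + -b + c + -d| + (|-a + -b + -c + d| + |-a + -b + -c + -d|))) := by
  rcases abs_cases a with ⟨h1,_⟩|⟨h1,_⟩ <;> rcases abs_cases b with ⟨h2,_⟩|⟨h2,_⟩ <;>
    rcases abs_cases c with ⟨h3,_⟩|⟨h3,_⟩ <;> rcases abs_cases d with ⟨h4,_⟩|⟨h4,_⟩ <;>
  rw [h1,h2,h3,h4] <;>
  linarith [le_abs_self (a+b+c+d), neg_abs_le (a+b+c+d),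
    le_abs_self (a+b+c+-d), neg_abs_le (a+b+c+-d),
    le_abs_self (a+b+-c+d), neg_abs_le (a+b+-c+d),
    le_abs_self (a+b+-c+-d), neg_abs_le (a+b+-c+-d),
    le_abs_self (a+-b+c+d), neg_abs_le (a+-b+c+d),
    le_abs_self (a+-b+c+-d), neg_abs_le (a+-b+c+-d),
    le_abs_self (a+-b+-c+d), neg_abs_le (a+-b+-c+d),
    le_abs_self (a+-b+-c+-d), neg_abs_le (a+-b+-c+-d),
    le_abs_self (-a+b+c+d), neg_abs_le (-a+b+c+d),
    le_abs_self (-a+b+c+-d), neg_abs_le (-a+b+c+-d),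
    le_abs_self (-a+b+-c+d), neg_abs_le (-a+b+-c+d),
    le_abs_self (-a+b+-c+-d), neg_abs_le (-a+b+-c+-d),
    le_abs_self (-a+-b+c+d), neg_abs_le (-a+-b+c+d),
    le_abs_self (-a+-b+c+-d), neg_abs_le (-a+-b+c+-d),
    le_abs_self (-a+-b+-c+d), neg_abs_le (-a+-b+-c+d),
    le_abs_self (-a+-b+-c+-d), neg_abs_le (-a+-b+-c+-d)]


def sg (b : Bool) : ℝ := if b then 1 else -1
def yv (e : Bool × Bool × Bool × Bool) : Fin 4 → ℝ := ![sg e.1, sg e.2.1, sg e.2.2.1, sg e.2.2.2]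

lemma rowsum (a : Fin 4 → ℝ) :
    (6:ℝ) * ∑ k, |a k| ≤ ∑ e : Bool × Bool × Bool × Bool, |∑ k, a k * yv e k| := by
  simp [Fintype.sum_prod_type, Fin.sum_univ_four, yv, sg]
  exact key (a 0) (a 1) (a 2) (a 3)

lemma sgpm (b : Bool) : sg b = 1 ∨ sg b = -1 := by cases b <;> simp [sg]

lemma cell (c : Fin 4 → Fin 4 → ℝ) :
    ∃ x y : Fin 4 → ℝ, (∀ k, x k = 1 ∨ x k = -1) ∧ (∀ k, y k = 1 ∨ y k = -1) ∧
      ∑ k0, ∑ k1, c k0 k1 * (x k0 * y k1) ≤ -(3/8) * ∑ k0, ∑ k1, |c k0 k1| := by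
  set T := ∑ k0, ∑ k1, |c k0 k1| with hT
  have havg : ∑ _e : Bool × Bool × Bool × Bool, ((3:ℝ)/8) * T ≤
      ∑ e : Bool × Bool × Bool × Bool, ∑ k0, |∑ k1, c k0 k1 * yv e k1| := by
    rw [Finset.sum_const]
    have h1 : (Finset.univ : Finset (Bool×Bool×Bool×Bool)).card • (((3:ℝ)/8) * T)
        = ∑ k0 : Fin 4, (6:ℝ) * ∑ k1, |c k0 k1| := by
      rw [← Finset.mul_sum, hT]
      norm_num
      ring
    rw [h1, Finset.sum_comm]
    exact Finset.sum_le_sum fun k0 _ => rowsum (fun k1 => c k0 k1)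
  obtain ⟨e, _, he⟩ := Finset.exists_le_of_sum_le (Finset.univ_nonempty) havg
  set y := yv e with hy
  refine ⟨fun k0 => if 0 ≤ ∑ k1, c k0 k1 * y k1 then -1 else 1, y, ?_, ?_, ?_⟩
  · intro k; dsimp only; split <;> simp
  · intro k
    fin_cases k <;>
      simp only [hy, yv, Matrix.cons_val_zero, Matrix.cons_val_one, Matrix.head_cons,
        Matrix.cons_val_two, Matrix.tail_cons, Matrix.cons_val_three, Fin.isValue] <;>
      exact sgpm _
  · have hrow : ∀ k0 : Fin 4, ∑ k1, c k0 k1 * ((if 0 ≤ ∑ k1, c k0 k1 * y k1 then (-1:ℝ) else 1) * y k1)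
        = -|∑ k1, c k0 k1 * y k1| := by
      intro k0
      split <;> rename_i h
      · rw [abs_of_nonneg h]; simp [Finset.sum_neg_distrib]
      · rw [abs_of_neg (lt_of_not_ge h)]; simp
    calc ∑ k0, ∑ k1, c k0 k1 * ((if 0 ≤ ∑ k1, c k0 k1 * y k1 then (-1:ℝ) else 1) * y k1)
        = ∑ k0, -|∑ k1, c k0 k1 * y k1| := by exact Finset.sum_congr rfl fun k0 _ => hrow k0
      _ = -∑ k0, |∑ k1, c k0 k1 * y k1| := by rw [Finset.sum_neg_distrib]
      _ ≤ -((3/8) * T) := by linarith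
      _ = -(3/8) * T := by ring

lemma mul_pm_le (x p q : ℝ) (hp : p = 1 ∨ p = -1) (hq : q = 1 ∨ q = -1) : x * (p * q) ≤ |x| := by
  rcases hp with h|h <;> rcases hq with h'|h' <;> subst h <;> subst h' <;>
    simp [le_abs_self, neg_le_abs, neg_abs_le]

lemma const_le : Real.log (1 + Real.sqrt 2) / Real.pi ≤ 3/8 := by
  have hs : Real.sqrt 2 ≤ 1.5 := by
    nlinarith [Real.sq_sqrt (by norm_num : (2:ℝ) ≥ 0), Real.sqrt_nonneg 2]
  have he : (1:ℝ) + Real.sqrt 2 ≤ Real.exp 1 := by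
    have := Real.exp_one_gt_d9
    linarith
  have hlog : Real.log (1 + Real.sqrt 2) ≤ 1 := by
    have h := Real.log_le_log (by positivity) he
    rwa [Real.log_exp] at h
  have hpi := Real.pi_gt_three
  rw [div_le_iff₀ Real.pi_pos]
  nlinarith [Real.log_nonneg (by nlinarith [Real.sqrt_nonneg 2] : (1:ℝ) ≤ 1 + Real.sqrt 2)]

/-- with `C = ln(1+√2)/π`, the minimum value `H*` of the Ising Hamiltonian
on the Chimera graph satisfies `H* ≤ A_0 + A_1 - C·A_01`. -/
theorem stmt6 (r : ℕ) (hr : 1 ≤ r)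
    (c0 : Fin (r - 1) → Fin r → Fin 4 → ℝ)
    (c1 : Fin r → Fin (r - 1) → Fin 4 → ℝ)
    (c01 : Fin r → Fin r → Fin 4 → Fin 4 → ℝ)
    (d : ChimeraVertex r → ℝ)
    (Sopt : ChimeraVertex r → ℝ) (hSopt : IsPM Sopt)
    (hmin : ∀ S : ChimeraVertex r → ℝ, IsPM S →
      IsingH c0 c1 c01 d Sopt ≤ IsingH c0 c1 c01 d S) :
    IsingH c0 c1 c01 d Sopt ≤
      (∑ i, ∑ j, ∑ k, |c0 i j k|) + (∑ i, ∑ j, ∑ k, |c1 i j k|)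
        - (Real.log (1 + Real.sqrt 2) / Real.pi) *
            (∑ i, ∑ j, ∑ k0, ∑ k1, |c01 i j k0 k1|) := by
  classical
  choose X Y hX hY hXY using fun (i j : Fin r) => cell (c01 i j)
  set S : ChimeraVertex r → ℝ :=
    fun v => if v.2.2.2 = 0 then X v.1 v.2.1 v.2.2.1 else Y v.1 v.2.1 v.2.2.1 with hS
  have hS0 : ∀ (i j : Fin r) (k : Fin 4), S (i, j, k, (0 : Fin 2)) = X i j k := by
    intro i j k; simp [hS]
  have hS1 : ∀ (i j : Fin r) (k : Fin 4), S (i, j, k, (1 : Fin 2)) = Y i j k := by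
    intro i j k; simp [hS]
  have hPM : IsPM S := by
    intro v
    by_cases h : v.2.2.2 = 0
    · simp only [hS, if_pos h]; exact hX _ _ _
    · simp only [hS, if_neg h]; exact hY _ _ _
  have hPM' : IsPM (fun v => -S v) := by
    intro v; rcases hPM v with h|h <;> simp [h]
  have h1 := hmin S hPM
  have h2 := hmin _ hPM'
  have hsum : IsingH c0 c1 c01 d S + IsingH c0 c1 c01 d (fun v => -S v) =
      2 * ((∑ i, ∑ j, ∑ k, c0 i j k * (S (lowRow i, j, k, 0) * S (highRow i, j, k, 0)))
        + (∑ i, ∑ j, ∑ k, c1 i j k * (S (i, lowRow j, k, 1) * S (i, highRow j, k, 1)))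
        + (∑ i, ∑ j, ∑ k0, ∑ k1, c01 i j k0 k1 * (S (i, j, k0, 0) * S (i, j, k1, 1)))) := by
    unfold IsingH
    simp only [mul_neg, neg_mul, neg_neg, Finset.sum_neg_distrib]
    ring
  have hQ : IsingH c0 c1 c01 d Sopt ≤
      (∑ i, ∑ j, ∑ k, c0 i j k * (S (lowRow i, j, k, 0) * S (highRow i, j, k, 0)))
        + (∑ i, ∑ j, ∑ k, c1 i j k * (S (i, lowRow j, k, 1) * S (i, highRow j, k, 1)))
        + (∑ i, ∑ j, ∑ k0, ∑ k1, c01 i j k0 k1 * (S (i, j, k0, 0) * S (i, j, k1, 1))) := by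
    linarith
  have hT0 : (∑ i, ∑ j, ∑ k, c0 i j k * (S (lowRow i, j, k, 0) * S (highRow i, j, k, 0)))
      ≤ ∑ i, ∑ j, ∑ k, |c0 i j k| :=
    Finset.sum_le_sum fun i _ => Finset.sum_le_sum fun j _ => Finset.sum_le_sum fun k _ =>
      mul_pm_le _ _ _ (hPM _) (hPM _)
  have hT1 : (∑ i, ∑ j, ∑ k, c1 i j k * (S (i, lowRow j, k, 1) * S (i, highRow j, k, 1)))
      ≤ ∑ i, ∑ j, ∑ k, |c1 i j k| :=
    Finset.sum_le_sum fun i _ => Finset.sum_le_sum fun j _ => Finset.sum_le_sum fun k _ =>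
      mul_pm_le _ _ _ (hPM _) (hPM _)
  have hT01 : (∑ i, ∑ j, ∑ k0, ∑ k1, c01 i j k0 k1 * (S (i, j, k0, 0) * S (i, j, k1, 1)))
      ≤ -(3/8) * ∑ i, ∑ j, ∑ k0, ∑ k1, |c01 i j k0 k1| := by
    have step : ∀ i j : Fin r, (∑ k0, ∑ k1, c01 i j k0 k1 * (S (i, j, k0, 0) * S (i, j, k1, 1)))
        ≤ -(3/8) * ∑ k0, ∑ k1, |c01 i j k0 k1| := by
      intro i j
      have := hXY i j
      simp only [hS0, hS1]
      exact this
    calc (∑ i, ∑ j, ∑ k0, ∑ k1, c01 i j k0 k1 * (S (i, j, k0, 0) * S (i, j, k1, 1)))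
        ≤ ∑ i, ∑ j, -(3/8) * ∑ k0, ∑ k1, |c01 i j k0 k1| :=
          Finset.sum_le_sum fun i _ => Finset.sum_le_sum fun j _ => step i j
      _ = -(3/8) * ∑ i, ∑ j, ∑ k0, ∑ k1, |c01 i j k0 k1| := by
          rw [Finset.mul_sum]; exact Finset.sum_congr rfl fun i _ => by rw [Finset.mul_sum]
  have hA01 : (0:ℝ) ≤ ∑ i, ∑ j, ∑ k0, ∑ k1, |c01 i j k0 k1| := by positivity
  have hC := const_le
  nlinarith [hQ, hT0, hT1, hT01, mul_le_mul_of_nonneg_right hC hA01]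
end

section
/- Theorem 2: Let C = ln(1+√2)/π. The minimum value H* of the Ising Hamiltonian H(S) on the Chimera graph G_r satisfies H* ≤ −(C/(3C+4))·(Σ_{(u,v)∈E}|c_{uv}| + Σ_{u∈V}|d_u|). -/
open Finset

/-!
Each edge class of the Chimera graph splits into matchings: `E_0` and `E_1` into two (by the
parity of the row or column index) and `E_01` into four (`k₁ = k₀ + t`, `t : Fin 4`), while the
parity of `i + j + l` is a proper 2-colouring. For a matching, give each matched pair an
independent uniformly random sign, oriented inside the pair so that the matched edge has energy
`-|c_e|`: every other term averages to zero, so `H* ≤ -∑_{e ∈ M} |c_e|`. For a colour class,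
freeze it at `-sign d` and randomise the other class, giving `H* ≤ -∑ |d_v|` over the class.
Averaging yields `10 H* ≤ -(∑ |c| + ∑ |d|)`, and `C = ln(1+√2)/π < 4/7` makes `C/(3C+4) < 1/10`.
-/

section BlockAveraging

variable {β : Type*}

def blockSign (f : β → Bool) : Option β → ℝ
  | none => 1
  | some b => if f b then 1 else -1

lemma blockSign_mul_self (f : β → Bool) (o : Option β) :
    blockSign f o * blockSign f o = 1 := by
  cases o with
  | none => simp [blockSign]
  | some b => by_cases h : f b <;> simp [blockSign, h]

lemma blockSign_update_not [DecidableEq β] (f : β → Bool) (a : β) (o : Option β) :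
    blockSign (Function.update f a (!f a)) o =
      if o = some a then -blockSign f o else blockSign f o := by
  cases o with
  | none => simp [blockSign]
  | some b =>
    by_cases hb : b = a
    · subst hb
      by_cases h : f b <;> simp [blockSign, h]
    · simp [blockSign, hb]

lemma sum_blockSign_mul_blockSign [Fintype β] [DecidableEq β] (o o' : Option β) :
    ∑ f : β → Bool, blockSign f o * blockSign f o' =
      if o = o' then (Fintype.card (β → Bool) : ℝ) else 0 := by
  split_ifs with h
  · simp [h, blockSign_mul_self]
  obtain ⟨a, ha⟩ : ∃ a, o = some a ∨ o' = some a := by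
    cases o with
    | some a => exact ⟨a, .inl rfl⟩
    | none => cases o' with
      | some a => exact ⟨a, .inr rfl⟩
      | none => exact absurd rfl h
  -- flipping the spin of block `a` negates the summand
  refine sum_ninvolution (fun f => Function.update f a (!f a)) (fun f => ?_)
    (fun f _ hf => ?_) (fun _ => mem_univ _) (fun f => by simp)
  · rcases ha with rfl | rfl
    · simp [blockSign_update_not, Ne.symm h]
    · simp [blockSign_update_not, h]
  · simpa using congrFun hf a

lemma sum_blockSign [Fintype β] [DecidableEq β] (o : Option β) :
    ∑ f : β → Bool, blockSign f o = if o = none then (Fintype.card (β → Bool) : ℝ) else 0 := by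
  simpa [blockSign] using sum_blockSign_mul_blockSign o none

variable {V : Type*}

def blockSpin (p : V → Option β) (σ : V → ℝ) (f : β → Bool) (v : V) : ℝ :=
  blockSign f (p v) * σ v

def blockCorr [DecidableEq β] (p : V → Option β) (σ : V → ℝ) (u v : V) : ℝ :=
  if p u = p v then σ u * σ v else 0

def blockField (p : V → Option β) (σ : V → ℝ) (v : V) : ℝ :=
  if p v = none then σ v else 0

lemma blockSpin_eq_one_or_neg_one (p : V → Option β) {σ : V → ℝ}
    (hσ : ∀ v, σ v = 1 ∨ σ v = -1) (f : β → Bool) (v : V) :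
    blockSpin p σ f v = 1 ∨ blockSpin p σ f v = -1 := by
  have hs : blockSign f (p v) = 1 ∨ blockSign f (p v) = -1 := by
    cases p v with
    | none => simp [blockSign]
    | some b => by_cases h : f b <;> simp [blockSign, h]
  unfold blockSpin
  rcases hs with hs | hs <;> rcases hσ v with h | h <;> simp [hs, h]

lemma sum_blockSpin_pair [Fintype β] [DecidableEq β] (p : V → Option β) (σ : V → ℝ) :
    ∑ f : β → Bool, ((fun u v => blockSpin p σ f u * blockSpin p σ f v), blockSpin p σ f) =
      (Fintype.card (β → Bool) : ℝ) • (blockCorr p σ, blockField p σ) := by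
  ext u v <;> simp only [Prod.fst_sum, Prod.snd_sum, Finset.sum_apply, Prod.smul_fst,
    Prod.smul_snd, Pi.smul_apply, smul_eq_mul]
  · simp_rw [blockSpin, mul_mul_mul_comm _ (σ u), ← Finset.sum_mul, sum_blockSign_mul_blockSign,
      blockCorr]
    split_ifs <;> simp
  · simp_rw [blockSpin, ← Finset.sum_mul, sum_blockSign, blockField]
    split_ifs <;> simp

/-- Probabilistic method: the blocks given by `p` get independent uniformly random signs, and
the average energy of the resulting spin configurations is `Φ (blockCorr p σ, blockField p σ)`. -/
lemma le_apply_blockCorr_blockField [Fintype β] [DecidableEq β]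
    (Φ : ((V → V → ℝ) × (V → ℝ)) →ₗ[ℝ] ℝ) {m : ℝ}
    (hm : ∀ S : V → ℝ, (∀ v, S v = 1 ∨ S v = -1) → m ≤ Φ (fun u v => S u * S v, S))
    (p : V → Option β) {σ : V → ℝ} (hσ : ∀ v, σ v = 1 ∨ σ v = -1) :
    m ≤ Φ (blockCorr p σ, blockField p σ) := by
  have hN : (0 : ℝ) < Fintype.card (β → Bool) := by exact_mod_cast Fintype.card_pos
  refine le_of_mul_le_mul_left ?_ hN
  calc (Fintype.card (β → Bool) : ℝ) * m = ∑ _f : β → Bool, m := by simp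
    _ ≤ ∑ f : β → Bool, Φ (fun u v => blockSpin p σ f u * blockSpin p σ f v, blockSpin p σ f) :=
      sum_le_sum fun f _ => hm _ (blockSpin_eq_one_or_neg_one p hσ f)
    _ = _ := by rw [← map_sum, sum_blockSpin_pair, map_smul, smul_eq_mul]

end BlockAveraging

lemma ite_mod_two_add_ite_succ_mod_two (n : ℕ) (x : ℝ) :
    ((if (n + 0) % 2 = 0 then x else 0) + if (n + 1) % 2 = 0 then x else 0) = x := by
  rcases Nat.mod_two_eq_zero_or_one n with h | h <;> simp [Nat.add_mod, h]

noncomputable def antiSign (w : ℝ) : ℝ := if 0 ≤ w then -1 else 1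

lemma antiSign_eq_one_or_neg_one (w : ℝ) : antiSign w = 1 ∨ antiSign w = -1 := by
  unfold antiSign; split_ifs <;> simp

lemma mul_antiSign (w : ℝ) : w * antiSign w = -|w| := by
  unfold antiSign
  split_ifs with h
  · rw [abs_of_nonneg h]; ring
  · rw [abs_of_neg (not_le.mp h)]; ring

section Chimera

variable {r : ℕ} (c0 : Fin (r - 1) → Fin r → Fin 4 → ℝ) (c1 : Fin r → Fin (r - 1) → Fin 4 → ℝ)
  (c01 : Fin r → Fin r → Fin 4 → Fin 4 → ℝ) (d : ChimeraVertex r → ℝ)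

/-- `IsingH c0 c1 c01 d S` is definitionally `chimeraForm c0 c1 c01 d (fun u v => S u * S v, S)`. -/
noncomputable def chimeraForm :
    ((ChimeraVertex r → ChimeraVertex r → ℝ) × (ChimeraVertex r → ℝ)) →ₗ[ℝ] ℝ where
  toFun QL :=
    (∑ i, ∑ j, ∑ k, c0 i j k * QL.1 (lowRow i, j, k, 0) (highRow i, j, k, 0))
      + (∑ i, ∑ j, ∑ k, c1 i j k * QL.1 (i, lowRow j, k, 1) (i, highRow j, k, 1))
      + (∑ i, ∑ j, ∑ k0, ∑ k1, c01 i j k0 k1 * QL.1 (i, j, k0, 0) (i, j, k1, 1))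
      + (∑ v, d v * QL.2 v)
  map_add' QL QL' := by
    simp only [Prod.fst_add, Prod.snd_add, Pi.add_apply, mul_add, sum_add_distrib]
    ring
  map_smul' a QL := by
    simp only [Prod.smul_fst, Prod.smul_snd, Pi.smul_apply, smul_eq_mul, RingHom.id_apply,
      mul_left_comm _ a, ← mul_sum]
    ring

lemma chimeraForm_apply (Q : ChimeraVertex r → ChimeraVertex r → ℝ) (L : ChimeraVertex r → ℝ) :
    chimeraForm c0 c1 c01 d (Q, L) =
      (∑ i, ∑ j, ∑ k, c0 i j k * Q (lowRow i, j, k, 0) (highRow i, j, k, 0))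
        + (∑ i, ∑ j, ∑ k, c1 i j k * Q (i, lowRow j, k, 1) (i, highRow j, k, 1))
        + (∑ i, ∑ j, ∑ k0, ∑ k1, c01 i j k0 k1 * Q (i, j, k0, 0) (i, j, k1, 1))
        + (∑ v, d v * L v) := rfl

lemma le_chimeraForm_blockCorr {β : Type*} [Fintype β] [DecidableEq β] {m : ℝ}
    (hm : ∀ S, IsPM S → m ≤ IsingH c0 c1 c01 d S) (p : ChimeraVertex r → Option β)
    {σ : ChimeraVertex r → ℝ} (hσ : ∀ v, σ v = 1 ∨ σ v = -1) :
    m ≤ chimeraForm c0 c1 c01 d (blockCorr p σ, blockField p σ) :=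
  le_apply_blockCorr_blockField _ hm p hσ

lemma lowRow_ne_highRow (i : Fin (r - 1)) : lowRow i ≠ highRow i := by
  simp [lowRow, highRow, Fin.ext_iff]

def pairRep (b : ℕ) (i : Fin r) : Fin r := ⟨i - (i + b) % 2, by omega⟩

lemma pairRep_lowRow_eq_iff (b : ℕ) (i : Fin (r - 1)) :
    pairRep b (lowRow i) = pairRep b (highRow i) ↔ (i.val + b) % 2 = 0 := by
  simp only [Fin.ext_iff, pairRep, lowRow, highRow]
  omega

def chimeraColor (v : ChimeraVertex r) : ℕ := v.1.val + v.2.1.val + v.2.2.2.val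

def chimeraTranspose (v : ChimeraVertex r) : ChimeraVertex r := (v.2.1, v.1, v.2.2.1, 1 - v.2.2.2)

lemma chimeraTranspose_involutive : Function.Involutive (chimeraTranspose (r := r)) :=
  fun v => by simp [chimeraTranspose]

lemma isingH_comp_chimeraTranspose (S : ChimeraVertex r → ℝ) :
    IsingH c0 c1 c01 d (S ∘ chimeraTranspose) =
      IsingH (fun i j k => c1 j i k) (fun i j k => c0 j i k) (fun i j k0 k1 => c01 j i k1 k0)
        (d ∘ chimeraTranspose) S := by
  have hE01 : ∑ i, ∑ j, ∑ k0, ∑ k1, c01 i j k0 k1 * (S (j, i, k0, 1) * S (j, i, k1, 0)) =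
      ∑ i, ∑ j, ∑ k0, ∑ k1, c01 j i k1 k0 * (S (i, j, k0, 0) * S (i, j, k1, 1)) := by
    rw [sum_comm]; refine sum_congr rfl fun i _ => ?_
    refine sum_congr rfl fun j _ => ?_
    rw [sum_comm]; refine sum_congr rfl fun k0 _ => ?_
    refine sum_congr rfl fun k1 _ => ?_
    ring
  have hfield : ∑ v, d v * S (chimeraTranspose v) = ∑ v, d (chimeraTranspose v) * S v := by
    calc ∑ v, d v * S (chimeraTranspose v)
        = ∑ v, d (chimeraTranspose (chimeraTranspose v)) * S (chimeraTranspose v) := by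
          simp only [chimeraTranspose_involutive _]
      _ = _ := Equiv.sum_comp (chimeraTranspose_involutive.toPerm _) fun v =>
          d (chimeraTranspose v) * S v
  simp only [IsingH, Function.comp_apply, hfield]
  simp only [chimeraTranspose, sub_zero, sub_self]
  rw [hE01]
  congr 2
  rw [add_comm]
  congr 1 <;> exact sum_comm

variable {c0 c1 c01 d} {m : ℝ} (hm : ∀ S, IsPM S → m ≤ IsingH c0 c1 c01 d S)
include hm

/-- The blocks are the pairs of rows `i, i + 1` with `i + b` even; within a block the relative
sign `σ` makes each `E_0` edge between the two rows contribute `-|c0 i j k|`. -/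
lemma le_sum_E0_matching (b : ℕ) :
    m ≤ ∑ i, ∑ j, ∑ k, if (i.val + b) % 2 = 0 then -|c0 i j k| else 0 := by
  let p : ChimeraVertex r → Option (ChimeraVertex r) := fun v => some (pairRep b v.1, v.2)
  let σ : ChimeraVertex r → ℝ := fun v =>
    if h : v.1.val < r - 1 ∧ (v.1.val + b) % 2 = 0 then
      antiSign (c0 ⟨v.1, h.1⟩ v.2.1 v.2.2.1) else 1
  have hσ : ∀ v, σ v = 1 ∨ σ v = -1 := fun v => by
    unfold σ; split_ifs
    exacts [antiSign_eq_one_or_neg_one _, .inl rfl]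
  have hE0 : ∀ i j k, c0 i j k * blockCorr p σ (lowRow i, j, k, 0) (highRow i, j, k, 0) =
      if (i.val + b) % 2 = 0 then -|c0 i j k| else 0 := by
    intro i j k
    by_cases hi : (i.val + b) % 2 = 0
    · have hlow : σ (lowRow i, j, k, 0) = antiSign (c0 i j k) := by
        simp [σ, lowRow, hi]
      have hhigh : σ (highRow i, j, k, 0) = 1 := by
        simp only [σ, highRow, dite_eq_right_iff]
        omega
      simp [blockCorr, p, pairRep_lowRow_eq_iff, hi, hlow, hhigh, mul_antiSign]
    · simp [blockCorr, p, pairRep_lowRow_eq_iff, hi]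
  have hE1 : ∀ i j k, blockCorr p σ (i, lowRow j, k, 1) (i, highRow j, k, 1) = 0 := by
    simp [blockCorr, p, lowRow_ne_highRow]
  have hE01 : ∀ i j k0 k1, blockCorr p σ (i, j, k0, 0) (i, j, k1, 1) = 0 := by
    simp [blockCorr, p]
  have hfield : ∀ v, blockField p σ v = 0 := by simp [blockField, p]
  simpa [chimeraForm_apply, hE0, hE1, hE01, hfield] using
    le_chimeraForm_blockCorr c0 c1 c01 d hm p hσ

lemma two_mul_le_neg_sum_abs_E0 : 2 * m ≤ -∑ i, ∑ j, ∑ k, |c0 i j k| := by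
  have h0 := le_sum_E0_matching hm 0
  have h1 := le_sum_E0_matching hm 1
  have hsum := add_le_add h0 h1
  simp only [← sum_add_distrib, ite_mod_two_add_ite_succ_mod_two, sum_neg_distrib] at hsum
  linarith

lemma two_mul_le_neg_sum_abs_E1 : 2 * m ≤ -∑ i, ∑ j, ∑ k, |c1 i j k| := by
  have hm' : ∀ S, IsPM S → m ≤ IsingH (fun i j k => c1 j i k) (fun i j k => c0 j i k)
      (fun i j k0 k1 => c01 j i k1 k0) (d ∘ chimeraTranspose) S := fun S hS => by
    rw [← isingH_comp_chimeraTranspose]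
    exact hm _ fun v => hS _
  rw [sum_comm]
  exact two_mul_le_neg_sum_abs_E0 hm'

lemma le_neg_sum_abs_E01_matching (t : Fin 4) :
    m ≤ -∑ i, ∑ j, ∑ k, |c01 i j k (k + t)| := by
  let p : ChimeraVertex r → Option (Fin r × Fin r × Fin 4) := fun v =>
    some (v.1, v.2.1, if v.2.2.2 = 0 then v.2.2.1 else v.2.2.1 - t)
  let σ : ChimeraVertex r → ℝ := fun v =>
    if v.2.2.2 = 1 then antiSign (c01 v.1 v.2.1 (v.2.2.1 - t) v.2.2.1) else 1
  have hσ : ∀ v, σ v = 1 ∨ σ v = -1 := fun v => by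
    unfold σ; split_ifs
    exacts [antiSign_eq_one_or_neg_one _, .inl rfl]
  have hE0 : ∀ i j k, blockCorr p σ (lowRow i, j, k, 0) (highRow i, j, k, 0) = 0 := by
    simp [blockCorr, p, lowRow_ne_highRow]
  have hE1 : ∀ i j k, blockCorr p σ (i, lowRow j, k, 1) (i, highRow j, k, 1) = 0 := by
    simp [blockCorr, p, lowRow_ne_highRow]
  have hE01 : ∀ i j k0 k1, c01 i j k0 k1 * blockCorr p σ (i, j, k0, 0) (i, j, k1, 1) =
      if k0 + t = k1 then -|c01 i j k0 k1| else 0 := by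
    intro i j k0 k1
    by_cases hk : k0 + t = k1
    · subst hk
      simp [blockCorr, p, σ, mul_antiSign]
    · have hk' : k0 ≠ k1 - t := fun h => hk (by rw [h, sub_add_cancel])
      simp [blockCorr, p, hk, hk']
  have hfield : ∀ v, blockField p σ v = 0 := by simp [blockField, p]
  simpa [chimeraForm_apply, hE0, hE1, hE01, hfield] using
    le_chimeraForm_blockCorr c0 c1 c01 d hm p hσ

lemma four_mul_le_neg_sum_abs_E01 : 4 * m ≤ -∑ i, ∑ j, ∑ k0, ∑ k1, |c01 i j k0 k1| := by
  have hsum := sum_le_sum fun (t : Fin 4) (_ : t ∈ univ) => le_neg_sum_abs_E01_matching hm t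
  have hshift : ∀ i j k, ∑ t : Fin 4, |c01 i j k (k + t)| = ∑ k1, |c01 i j k k1| :=
    fun i j k => Equiv.sum_comp (Equiv.addLeft k) (fun k1 => |c01 i j k k1|)
  have hswap : ∑ t : Fin 4, ∑ i, ∑ j, ∑ k, |c01 i j k (k + t)| =
      ∑ i, ∑ j, ∑ k0, ∑ k1, |c01 i j k0 k1| := by
    rw [sum_comm]; refine sum_congr rfl fun i _ => ?_
    rw [sum_comm]; refine sum_congr rfl fun j _ => ?_
    rw [sum_comm]; exact sum_congr rfl fun k _ => hshift i j k
  simp only [sum_const, card_univ, Fintype.card_fin, nsmul_eq_mul, Nat.cast_ofNat,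
    sum_neg_distrib, hswap] at hsum
  linarith

/-- Every edge joins vertices of different colour parity, so freezing one colour class at the spins
`-sign d` and randomising the rest of the vertices kills all edge terms. -/
lemma le_sum_field_colorClass (b : ℕ) :
    m ≤ ∑ v, if (chimeraColor v + b) % 2 = 0 then -|d v| else 0 := by
  let p : ChimeraVertex r → Option (ChimeraVertex r) := fun v =>
    if (chimeraColor v + b) % 2 = 0 then none else some v
  let σ : ChimeraVertex r → ℝ := fun v => antiSign (d v)
  have hσ : ∀ v, σ v = 1 ∨ σ v = -1 := fun v => antiSign_eq_one_or_neg_one (d v)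
  have hcorr : ∀ u v, chimeraColor v = chimeraColor u + 1 →
      blockCorr p σ u v = 0 := by
    intro u v huv
    have hne : p u ≠ p v := by
      simp only [p]
      split_ifs <;> first | omega | simp
    simp [blockCorr, hne]
  have hE0 : ∀ i j k, blockCorr p σ (lowRow i, j, k, 0) (highRow i, j, k, 0) = 0 :=
    fun i j k => hcorr _ _ <| by
      simp only [chimeraColor, lowRow, highRow, Fin.isValue, Fin.coe_ofNat_eq_mod]
      omega
  have hE1 : ∀ i j k, blockCorr p σ (i, lowRow j, k, 1) (i, highRow j, k, 1) = 0 :=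
    fun i j k => hcorr _ _ <| by
      simp only [chimeraColor, lowRow, highRow, Fin.isValue, Fin.coe_ofNat_eq_mod]
      omega
  have hE01 : ∀ i j k0 k1, blockCorr p σ (i, j, k0, 0) (i, j, k1, 1) = 0 :=
    fun i j k0 k1 => hcorr _ _ (by simp [chimeraColor])
  have hfield : ∀ v, d v * blockField p σ v =
      if (chimeraColor v + b) % 2 = 0 then -|d v| else 0 := by
    intro v
    by_cases hv : (chimeraColor v + b) % 2 = 0 <;> simp [blockField, p, σ, hv, mul_antiSign]
  simpa [chimeraForm_apply, hE0, hE1, hE01, hfield] using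
    le_chimeraForm_blockCorr c0 c1 c01 d hm p hσ

lemma two_mul_le_neg_sum_abs_field : 2 * m ≤ -∑ v, |d v| := by
  have hsum := add_le_add (le_sum_field_colorClass hm 0) (le_sum_field_colorClass hm 1)
  simp only [← sum_add_distrib, ite_mod_two_add_ite_succ_mod_two, sum_neg_distrib] at hsum
  linarith

end Chimera

lemma log_one_add_sqrt_two_div_pi_div_le :
    Real.log (1 + Real.sqrt 2) / Real.pi / (3 * (Real.log (1 + Real.sqrt 2) / Real.pi) + 4)
      ≤ 1 / 10 := by
  have hsqrt : Real.sqrt 2 < 3 / 2 := by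
    rw [Real.sqrt_lt' (by norm_num)]
    norm_num
  have hlog0 : 0 ≤ Real.log (1 + Real.sqrt 2) :=
    Real.log_nonneg (by linarith [Real.sqrt_nonneg 2])
  have hlog : Real.log (1 + Real.sqrt 2) ≤ Real.sqrt 2 := by
    linarith [Real.log_le_sub_one_of_pos (x := 1 + Real.sqrt 2) (by positivity)]
  set C := Real.log (1 + Real.sqrt 2) / Real.pi
  have hC0 : 0 ≤ C := div_nonneg hlog0 Real.pi_pos.le
  have hC : C ≤ 4 / 7 := by
    rw [div_le_iff₀ Real.pi_pos]
    linarith [Real.pi_gt_three]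
  rw [div_le_iff₀ (by linarith)]
  linarith

theorem stmt9_general (r : ℕ)
    (c0 : Fin (r - 1) → Fin r → Fin 4 → ℝ)
    (c1 : Fin r → Fin (r - 1) → Fin 4 → ℝ)
    (c01 : Fin r → Fin r → Fin 4 → Fin 4 → ℝ)
    (d : ChimeraVertex r → ℝ)
    (Sopt : ChimeraVertex r → ℝ)
    (hmin : ∀ S : ChimeraVertex r → ℝ, IsPM S →
      IsingH c0 c1 c01 d Sopt ≤ IsingH c0 c1 c01 d S) :
    IsingH c0 c1 c01 d Sopt ≤
      -(Real.log (1 + Real.sqrt 2) / Real.pi /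
          (3 * (Real.log (1 + Real.sqrt 2) / Real.pi) + 4)) *
        ((∑ i, ∑ j, ∑ k, |c0 i j k|) + (∑ i, ∑ j, ∑ k, |c1 i j k|)
          + (∑ i, ∑ j, ∑ k0, ∑ k1, |c01 i j k0 k1|) + (∑ v, |d v|)) := by
  have hE0 := two_mul_le_neg_sum_abs_E0 hmin
  have hE1 := two_mul_le_neg_sum_abs_E1 hmin
  have hE01 := four_mul_le_neg_sum_abs_E01 hmin
  have hfield := two_mul_le_neg_sum_abs_field hmin
  have hW : 0 ≤ (∑ i, ∑ j, ∑ k, |c0 i j k|) + (∑ i, ∑ j, ∑ k, |c1 i j k|)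
      + (∑ i, ∑ j, ∑ k0, ∑ k1, |c01 i j k0 k1|) + (∑ v, |d v|) := by positivity
  nlinarith [log_one_add_sqrt_two_div_pi_div_le]

/-- Theorem 2: with `C = ln(1+√2)/π`, the minimum value `H*` of the Ising
Hamiltonian on the Chimera graph satisfies
`H* ≤ -(C/(3C+4)) · (Σ_{(u,v)∈E} |c_uv| + Σ_{u∈V} |d_u|)`. -/
theorem stmt9 (r : ℕ) (hr : 1 ≤ r)
    (c0 : Fin (r - 1) → Fin r → Fin 4 → ℝ)
    (c1 : Fin r → Fin (r - 1) → Fin 4 → ℝ)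
    (c01 : Fin r → Fin r → Fin 4 → Fin 4 → ℝ)
    (d : ChimeraVertex r → ℝ)
    (Sopt : ChimeraVertex r → ℝ) (hSopt : IsPM Sopt)
    (hmin : ∀ S : ChimeraVertex r → ℝ, IsPM S →
      IsingH c0 c1 c01 d Sopt ≤ IsingH c0 c1 c01 d S) :
    IsingH c0 c1 c01 d Sopt ≤
      -(Real.log (1 + Real.sqrt 2) / Real.pi /
          (3 * (Real.log (1 + Real.sqrt 2) / Real.pi) + 4)) *
        ((∑ i, ∑ j, ∑ k, |c0 i j k|) + (∑ i, ∑ j, ∑ k, |c1 i j k|)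
          + (∑ i, ∑ j, ∑ k0, ∑ k1, |c01 i j k0 k1|) + (∑ v, |d v|)) :=
  stmt9_general r c0 c1 c01 d Sopt hmin
end
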